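/- arXiv:2310.14337 — 7 statements merged into one kernel-verified Lean document; each statement's English description precedes it below -/
import Mathlib

section
/- Let θ be a real d×K matrix such that θᵀθ is invertible, and let θ⁺ = (θᵀθ)⁻¹θᵀ denote its pseudo-inverse. Let c₁,…,c_M ∈ ℝ^K, let p₁,…,p_M be nonnegative real weights, and let ℓ₁,…,ℓ_M : ℝ^d → ℝ be arbitrary functions. Define b_i = θ c_i for each i and b̄ = (1/M) Σ_{i=1}^M b_i. Then the PPFL objective with all-ones affinity matrix and λ = 1/M equals the GLMM-type objective; that is, Σ_{i=1}^M p_i ℓ_i(θ c_i) + (1/(2M)) Σ_{i=1}^M Σ_{j=1}^M ‖c_i − c_j‖² = Σ_{i=1}^M p_i ℓ_i(b_i) + Σ_{i=1}^M (b_i − b̄)ᵀ (θ⁺)ᵀ θ⁺ (b_i − b̄), where ‖·‖ denotes the Euclidean norm. -/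
open Matrix Finset

/-!
The pseudo-inverse is a left inverse, `θ⁺ θ = I`, so on the centred vectors
`bᵢ - b̄ = θ (cᵢ - c̄)` the quadratic form of `(θ⁺)ᵀ θ⁺` is the squared Euclidean norm of
`cᵢ - c̄`. The theorem then reduces, coordinate by coordinate, to the identity
`(1 / 2M) Σᵢ Σⱼ (xᵢ - xⱼ)² = Σᵢ (xᵢ - x̄)²` between pairwise and centred sums of squares.
-/

theorem one_div_two_mul_card_mul_sum_sum_sub_sq {ι : Type*} [Fintype ι] (x : ι → ℝ) :
    1 / (2 * Fintype.card ι) * ∑ i, ∑ j, (x i - x j) ^ 2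
      = ∑ i, (x i - (Fintype.card ι : ℝ)⁻¹ * ∑ j, x j) ^ 2 := by
  rcases isEmpty_or_nonempty ι with hι | hι
  · simp
  set n : ℝ := (Fintype.card ι : ℝ)
  set s : ℝ := ∑ j, x j
  have hn : n ≠ 0 := Nat.cast_ne_zero.mpr Fintype.card_ne_zero
  have expand_pairs : ∑ i, ∑ j, (x i - x j) ^ 2 = 2 * n * ∑ i, x i ^ 2 - 2 * s ^ 2 := by
    simp only [sub_sq, sum_add_distrib, sum_sub_distrib, sum_const, card_univ, nsmul_eq_mul,
      ← mul_sum, ← sum_mul, s, n]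
    ring
  have expand_centred : ∑ i, (x i - n⁻¹ * s) ^ 2 = ∑ i, x i ^ 2 - n⁻¹ * s ^ 2 := by
    simp only [sub_sq, sum_add_distrib, sum_sub_distrib, sum_const, card_univ, nsmul_eq_mul,
      ← mul_sum, ← sum_mul, s, n]
    field_simp
    ring
  rw [expand_pairs, expand_centred]
  field_simp

theorem one_div_two_mul_card_mul_sum_sum_sum_sub_sq {ι κ : Type*} [Fintype ι] [Fintype κ]
    (c : ι → κ → ℝ) :
    1 / (2 * Fintype.card ι) * ∑ i, ∑ j, ∑ k, (c i k - c j k) ^ 2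
      = ∑ i, ∑ k, (c i k - ((Fintype.card ι : ℝ)⁻¹ • ∑ j, c j) k) ^ 2 := by
  have coordinates_first : ∑ i, ∑ j, ∑ k, (c i k - c j k) ^ 2
      = ∑ k, ∑ i, ∑ j, (c i k - c j k) ^ 2 :=
    (sum_congr rfl fun i _ => sum_comm).trans sum_comm
  rw [coordinates_first, mul_sum]
  refine (sum_congr rfl fun k _ => ?_).trans sum_comm
  simpa only [Pi.smul_apply, Finset.sum_apply, smul_eq_mul] using
    one_div_two_mul_card_mul_sum_sum_sub_sq fun i => c i k

theorem dotProduct_transpose_mul_mulVec_of_mul_eq_one {m n R : Type*} [Fintype m] [Fintype n]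
    [DecidableEq n] [CommSemiring R] {A : Matrix n m R} {θ : Matrix m n R} (h : A * θ = 1)
    (u : n → R) : (θ *ᵥ u) ⬝ᵥ ((Aᵀ * A) *ᵥ (θ *ᵥ u)) = u ⬝ᵥ u := by
  rw [← mulVec_mulVec, dotProduct_mulVec, vecMul_transpose, mulVec_mulVec, h, one_mulVec]

theorem stmt_0_general (d K M : ℕ)
    (θ : Matrix (Fin d) (Fin K) ℝ) (hθ : IsUnit (θᵀ * θ))
    (c : Fin M → Fin K → ℝ) (p : Fin M → ℝ)
    (ℓ : Fin M → (Fin d → ℝ) → ℝ)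
    (θplus : Matrix (Fin K) (Fin d) ℝ) (hθplus : θplus = (θᵀ * θ)⁻¹ * θᵀ)
    (b : Fin M → Fin d → ℝ) (hb : ∀ i, b i = θ *ᵥ c i)
    (bbar : Fin d → ℝ) (hbbar : bbar = (M : ℝ)⁻¹ • ∑ i, b i) :
    ∑ i, p i * ℓ i (θ *ᵥ c i)
      + (1 / (2 * M)) * ∑ i, ∑ j, ∑ k, (c i k - c j k) ^ 2
    = ∑ i, p i * ℓ i (b i)
      + ∑ i, (b i - bbar) ⬝ᵥ ((θplusᵀ * θplus) *ᵥ (b i - bbar)) := by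
  have left_inverse : θplus * θ = 1 := by
    rw [hθplus, Matrix.mul_assoc]
    exact nonsing_inv_mul _ ((isUnit_iff_isUnit_det _).mp hθ)
  have centred : ∀ i, b i - bbar = θ *ᵥ (c i - (M : ℝ)⁻¹ • ∑ j, c j) := by
    intro i
    simp only [hbbar, hb, mulVec_sub, mulVec_smul, mulVec_sum]
  simp only [centred, dotProduct_transpose_mul_mulVec_of_mul_eq_one left_inverse, ← hb]
  congr 1
  simpa only [Fintype.card_fin, dotProduct, Pi.sub_apply, sq] using
    one_div_two_mul_card_mul_sum_sum_sum_sub_sq c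

/-- Theorem 1 (PPFL ↔ GLMM objective equivalence): with all-ones affinity matrix
and λ = 1/M, the PPFL objective equals the GLMM-type objective. -/
theorem stmt_0 (d K M : ℕ) (hM : 0 < M)
    (θ : Matrix (Fin d) (Fin K) ℝ) (hθ : IsUnit (θᵀ * θ))
    (c : Fin M → Fin K → ℝ) (p : Fin M → ℝ) (hp : ∀ i, 0 ≤ p i)
    (ℓ : Fin M → (Fin d → ℝ) → ℝ)
    (θplus : Matrix (Fin K) (Fin d) ℝ) (hθplus : θplus = (θᵀ * θ)⁻¹ * θᵀ)
    (b : Fin M → Fin d → ℝ) (hb : ∀ i, b i = θ *ᵥ c i)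
    (bbar : Fin d → ℝ) (hbbar : bbar = (M : ℝ)⁻¹ • ∑ i, b i) :
    ∑ i, p i * ℓ i (θ *ᵥ c i)
      + (1 / (2 * M)) * ∑ i, ∑ j, ∑ k, (c i k - c j k) ^ 2
    = ∑ i, p i * ℓ i (b i)
      + ∑ i, (b i - bbar) ⬝ᵥ ((θplusᵀ * θplus) *ᵥ (b i - bbar)) :=
  stmt_0_general d K M θ hθ c p ℓ θplus hθplus b hb bbar hbbar
end

section
/- Let W be a symmetric positive semi-definite real M×M matrix with entries w_ij, let d_ii = Σ_{j=1}^M w_ij, and let c₁,…,c_M and c₁ᵗ,…,c_Mᵗ be vectors in ℝ^K. Define F_reg(c₁,…,c_M) = Σ_i d_ii ⟨c_i, c_i⟩ − Σ_{i,j} w_ij ⟨c_i, c_j⟩ and the surrogate S(c₁,…,c_M) = Σ_i d_ii ⟨c_i, c_i⟩ − Σ_{i,j} w_ij ⟨c_iᵗ, c_jᵗ⟩ − 2 Σ_i ⟨Σ_j w_ij c_jᵗ, c_i − c_iᵗ⟩. Then S(c₁,…,c_M) ≥ F_reg(c₁,…,c_M) for all choices of c₁,…,c_M, with equality when c_i =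 c_iᵗ for every i. -/
/-!
The degree terms cancel, and `S c - F_reg c` is the quadratic form of `W` evaluated at the
displacement `c - cᵗ`: with `X` the `M × K` matrix whose rows are the `c_i - c_iᵗ`, it equals
`Σ_{i,j} w_ij ⟨X_i, X_j⟩ = tr (Xᵀ W X)`, which is nonnegative because `Xᵀ W X` is positive
semidefinite, and vanishes at `c = cᵗ`.
-/

open Matrix Finset

namespace Matrix

variable {m n R : Type*} [Fintype m] [Fintype n]

theorem trace_transpose_mul_mul_eq_sum [CommSemiring R] (W : Matrix m m R) (x y : Matrix m n R) :
    (xᵀ * W * y).trace = ∑ i, ∑ j, W i j * (x i ⬝ᵥ y j) := by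
  rw [trace_mul_cycle, trace_mul_comm]
  simp only [trace, diag, mul_apply', transpose, of_apply, dotProduct_comm (y _)]
  rfl

theorem sum_sum_smul_dotProduct_eq_trace [CommSemiring R] (W : Matrix m m R) (y z : Matrix m n R) :
    ∑ i, (∑ j, W i j • y j) ⬝ᵥ z i = (zᵀ * W * y).trace := by
  simp only [trace_transpose_mul_mul_eq_sum, sum_dotProduct, smul_dotProduct, smul_eq_mul,
    dotProduct_comm (y _)]

theorem trace_transpose_mul_mul_sub [CommRing R] {W : Matrix m m R} (hW : W.IsSymm)
    (x y : Matrix m n R) :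
    ((x - y)ᵀ * W * (x - y)).trace
      = (xᵀ * W * x).trace - (yᵀ * W * y).trace - 2 * ((x - y)ᵀ * W * y).trace := by
  obtain ⟨d, rfl⟩ : ∃ d, x = y + d := ⟨x - y, by abel⟩
  have hswap : (yᵀ * W * d).trace = (dᵀ * W * y).trace := by
    rw [← trace_transpose, transpose_mul, transpose_mul, transpose_transpose, hW.eq,
      Matrix.mul_assoc]
  simp only [add_sub_cancel_left, transpose_add, Matrix.add_mul, Matrix.mul_add, trace_add, hswap]
  ring

theorem IsSymm.sum_mul_dotProduct_sub [CommRing R] {W : Matrix m m R} (hW : W.IsSymm)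
    (x y : Matrix m n R) :
    ∑ i, ∑ j, W i j * ((x i - y i) ⬝ᵥ (x j - y j))
      = ∑ i, ∑ j, W i j * (x i ⬝ᵥ x j) - ∑ i, ∑ j, W i j * (y i ⬝ᵥ y j)
        - 2 * ∑ i, (∑ j, W i j • y j) ⬝ᵥ (x i - y i) := by
  have h := trace_transpose_mul_mul_sub hW x y
  rw [← sum_sum_smul_dotProduct_eq_trace W y (x - y)] at h
  simp only [trace_transpose_mul_mul_eq_sum] at h
  exact h

theorem PosSemidef.sum_mul_dotProduct_nonneg {W : Matrix m m ℝ} (hW : W.PosSemidef)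
    (x : Matrix m n ℝ) : 0 ≤ ∑ i, ∑ j, W i j * (x i ⬝ᵥ x j) := by
  rw [← trace_transpose_mul_mul_eq_sum, ← conjTranspose_eq_transpose_of_trivial]
  exact (hW.conjTranspose_mul_mul_same x).trace_nonneg

end Matrix

theorem stmt_3_general (M K : ℕ) (W : Matrix (Fin M) (Fin M) ℝ) (hW : W.PosSemidef)
    (dg : Fin M → ℝ)
    (Freg S : (Fin M → Fin K → ℝ) → ℝ)
    (ct : Fin M → Fin K → ℝ)
    (hFreg : ∀ c, Freg c
      = ∑ i, dg i * (c i ⬝ᵥ c i) - ∑ i, ∑ j, W i j * (c i ⬝ᵥ c j))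
    (hS : ∀ c, S c
      = ∑ i, dg i * (c i ⬝ᵥ c i) - ∑ i, ∑ j, W i j * (ct i ⬝ᵥ ct j)
        - 2 * ∑ i, (∑ j, W i j • ct j) ⬝ᵥ (c i - ct i)) :
    (∀ c : Fin M → Fin K → ℝ, Freg c ≤ S c) ∧ S ct = Freg ct := by
  have gap (c : Fin M → Fin K → ℝ) :
      S c - Freg c = ∑ i, ∑ j, W i j * ((c i - ct i) ⬝ᵥ (c j - ct j)) := by
    rw [hS, hFreg, (isHermitian_iff_isSymm.1 hW.1).sum_mul_dotProduct_sub c ct]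
    ring
  refine ⟨fun c => sub_nonneg.1 ?_, sub_eq_zero.1 ?_⟩
  · rw [gap]
    exact hW.sum_mul_dotProduct_nonneg (c - ct)
  · simp [gap]

/-- Majorization property of the MM surrogate for the Laplacian regularizer:
S(c) ≥ F_reg(c) for all c, with equality at c = cᵗ. -/
theorem stmt_3 (M K : ℕ) (W : Matrix (Fin M) (Fin M) ℝ) (hW : W.PosSemidef)
    (dg : Fin M → ℝ) (hdg : ∀ i, dg i = ∑ j, W i j)
    (Freg S : (Fin M → Fin K → ℝ) → ℝ)
    (ct : Fin M → Fin K → ℝ)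
    (hFreg : ∀ c, Freg c
      = ∑ i, dg i * (c i ⬝ᵥ c i) - ∑ i, ∑ j, W i j * (c i ⬝ᵥ c j))
    (hS : ∀ c, S c
      = ∑ i, dg i * (c i ⬝ᵥ c i) - ∑ i, ∑ j, W i j * (ct i ⬝ᵥ ct j)
        - 2 * ∑ i, (∑ j, W i j • ct j) ⬝ᵥ (c i - ct i)) :
    (∀ c : Fin M → Fin K → ℝ, Freg c ≤ S c) ∧ S ct = Freg ct :=
  stmt_3_general M K W hW dg Freg S ct hFreg hS
end

section
/- Let c ∈ Δ^K have all coordinates strictly positive, let g ∈ ℝ^K and η > 0, and let c⁺ = MD(c, g, η) be the entropic mirror descent step. Then ⟨g, (c − c⁺)/η⟩ ≥ ‖(c − c⁺)/η‖₁², where ‖·‖₁ is the ℓ₁ norm on ℝ^K. -/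
/-!
Since `log c - log c⁺ = η g + log Z` and both `c` and `c⁺` have mass one, the symmetrised
Kullback–Leibler divergence `∑ (c - c⁺)(log c - log c⁺)` equals `η ⟨g, c - c⁺⟩`. It dominates
`‖c - c⁺‖₁²` by Sedrakyan's inequality with weights `c + c⁺` combined with the scalar bound
`2 (a - b)² / (a + b) ≤ (a - b)(log a - log b)`, which is the first term of the series of
`x (log (1 + x) - log (1 - x))` at `x = (a - b) / (a + b)`, all of whose terms are nonnegative.
Dividing by `η²` gives the claim.
-/

open Finset Real

theorem two_mul_sq_le_mul_log_sub_log {x : ℝ} (hx : |x| < 1) :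
    2 * x ^ 2 ≤ x * (log (1 + x) - log (1 - x)) := by
  have hsum := (hasSum_log_sub_log_of_abs_lt_one hx).mul_left x
  refine le_trans (le_of_eq ?_) (le_hasSum hsum 0 fun k _ => ?_)
  · ring
  · have : x * (2 * (1 / (2 * k + 1)) * x ^ (2 * k + 1)) = 2 / (2 * k + 1) * (x ^ (k + 1)) ^ 2 := by
      ring
    rw [this]
    positivity

theorem two_mul_sq_div_add_le_mul_log_sub_log {a b : ℝ} (ha : 0 < a) (hb : 0 < b) :
    2 * (a - b) ^ 2 / (a + b) ≤ (a - b) * (log a - log b) := by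
  set x := (a - b) / (a + b) with hx_def
  have hab : 0 < a + b := add_pos ha hb
  have hx : |x| < 1 := by
    rw [abs_div, abs_of_pos hab, div_lt_one hab, abs_lt]
    constructor <;> linarith
  have hlog : log (1 + x) - log (1 - x) = log a - log b := by
    have h1 : 1 + x = 2 / (a + b) * a := by rw [hx_def]; field_simp; ring
    have h2 : 1 - x = 2 / (a + b) * b := by rw [hx_def]; field_simp; ring
    have hc : 2 / (a + b) ≠ 0 := by positivity
    rw [h1, h2, log_mul hc ha.ne', log_mul hc hb.ne']
    ring
  have key := two_mul_sq_le_mul_log_sub_log hx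
  rw [hlog] at key
  calc 2 * (a - b) ^ 2 / (a + b) = (a + b) * (2 * x ^ 2) := by rw [hx_def]; field_simp
    _ ≤ (a + b) * (x * (log a - log b)) := by gcongr
    _ = (a - b) * (log a - log b) := by rw [hx_def]; field_simp

theorem sq_sum_abs_sub_le_sum_mul_log_sub_log {ι : Type*} [Fintype ι] {p q : ι → ℝ}
    (hp : ∀ i, 0 < p i) (hq : ∀ i, 0 < q i) (hp1 : ∑ i, p i = 1) (hq1 : ∑ i, q i = 1) :
    (∑ i, |p i - q i|) ^ 2 ≤ ∑ i, (p i - q i) * (log (p i) - log (q i)) := by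
  have hpq : ∀ i ∈ univ, 0 < p i + q i := fun i _ => add_pos (hp i) (hq i)
  have titu := sq_sum_div_le_sum_sq_div univ (fun i => |p i - q i|) hpq
  rw [sum_add_distrib, hp1, hq1] at titu
  calc (∑ i, |p i - q i|) ^ 2 ≤ ∑ i, 2 * (p i - q i) ^ 2 / (p i + q i) := by
        simp only [sq_abs] at titu
        simp only [mul_div_assoc, ← mul_sum]
        linarith
    _ ≤ ∑ i, (p i - q i) * (log (p i) - log (q i)) :=
        sum_le_sum fun i _ => two_mul_sq_div_add_le_mul_log_sub_log (hp i) (hq i)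

section EntropicStep

variable {ι : Type*} [Fintype ι]

noncomputable def entropicStep (c g : ι → ℝ) (η : ℝ) (k : ι) : ℝ :=
  c k * exp (-η * g k) / ∑ j, c j * exp (-η * g j)

variable {c : ι → ℝ} (g : ι → ℝ) (η : ℝ)

theorem entropicStep_normalizer_pos [Nonempty ι] (hc : ∀ k, 0 < c k) :
    0 < ∑ j, c j * exp (-η * g j) :=
  sum_pos (fun j _ => mul_pos (hc j) (exp_pos _)) univ_nonempty

theorem entropicStep_pos [Nonempty ι] (hc : ∀ k, 0 < c k) (k : ι) :
    0 < entropicStep c g η k :=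
  div_pos (mul_pos (hc k) (exp_pos _)) (entropicStep_normalizer_pos g η hc)

theorem sum_entropicStep [Nonempty ι] (hc : ∀ k, 0 < c k) :
    ∑ k, entropicStep c g η k = 1 := by
  simp only [entropicStep]
  rw [← sum_div, div_self (entropicStep_normalizer_pos g η hc).ne']

theorem log_sub_log_entropicStep [Nonempty ι] (hc : ∀ k, 0 < c k) (k : ι) :
    log (c k) - log (entropicStep c g η k) = η * g k + log (∑ j, c j * exp (-η * g j)) := by
  rw [entropicStep, log_div (mul_pos (hc k) (exp_pos _)).ne'
    (entropicStep_normalizer_pos g η hc).ne', log_mul (hc k).ne' (exp_pos _).ne', log_exp]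
  ring

theorem sum_mul_log_sub_log_entropicStep [Nonempty ι] (hc : ∀ k, 0 < c k) (hc1 : ∑ k, c k = 1) :
    ∑ k, (c k - entropicStep c g η k) * (log (c k) - log (entropicStep c g η k)) =
      η * ∑ k, g k * (c k - entropicStep c g η k) := by
  simp only [log_sub_log_entropicStep g η hc, mul_add, sum_add_distrib, ← sum_mul,
    sum_sub_distrib, hc1, sum_entropicStep g η hc, sub_self, zero_mul, add_zero, mul_sum]
  exact sum_congr rfl fun k _ => by ring

end EntropicStep

/-- Entropic mirror descent gradient-mapping inequality (Dang–Lan):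
⟨g, (c − c⁺)/η⟩ ≥ ‖(c − c⁺)/η‖₁². -/
theorem stmt_6 (K : ℕ) (c : Fin K → ℝ) (hc : c ∈ stdSimplex ℝ (Fin K))
    (hpos : ∀ k, 0 < c k) (g : Fin K → ℝ) (η : ℝ) (hη : 0 < η)
    (cplus : Fin K → ℝ)
    (hcplus : ∀ k, cplus k
      = c k * Real.exp (-η * g k) / ∑ j, c j * Real.exp (-η * g j)) :
    (∑ k, |(c k - cplus k) / η|) ^ 2 ≤ ∑ k, g k * ((c k - cplus k) / η) := by
  obtain rfl : cplus = entropicStep c g η := funext hcplus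
  have hc1 : ∑ k, c k = 1 := hc.2
  have : Nonempty (Fin K) := by
    by_contra h
    simp [not_nonempty_iff.mp h] at hc1
  have pinsker := sq_sum_abs_sub_le_sum_mul_log_sub_log hpos (entropicStep_pos g η hpos) hc1
    (sum_entropicStep g η hpos)
  rw [sum_mul_log_sub_log_entropicStep g η hpos hc1] at pinsker
  simp only [abs_div, abs_of_pos hη, ← sum_div, mul_div_assoc', div_pow]
  rw [div_le_div_iff₀ (by positivity) hη]
  linarith [mul_le_mul_of_nonneg_right pinsker hη.le]
end

section
/- Let c ∈ Δ^K have all coordinates strictly positive, let η > 0, and let g, g' ∈ ℝ^K. Let c⁺ = MD(c, g, η) and c⁺' = MD(c, g', η) be the entropic mirror descent steps from the same point c with the two gradients. Then (1/η) ‖c⁺ − c⁺'‖₁ ≤ ‖g − g'‖_∞, where ‖·‖₁ and ‖·‖_∞ are the ℓ₁ and ℓ∞ norms on ℝ^K. -/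
/-!
Write `p = MD(c, g, η)`. Exponential tilting composes, so `MD(c, g', η)` is `p` tilted by
`r k = exp (η (g k - g' k))`, i.e. `p k * r k / R` with `R = ∑ p r`, and the `ℓ₁` distance is
`(∑ p k |r k - R|) / R`. With `x = η ‖g - g'‖_∞` the values `r k` lie in `[L, M]`,
`L = exp (-x)`, `M = exp x`, and comparing `|· - R|` with its chord over `[L, M]` bounds the mean
absolute deviation by `2 (M - R)(R - L) / (M - L)`. Since `L M = 1` this is at most
`2 R (M + L - 2) / (M - L) = 2 R (cosh x - 1) / sinh x ≤ x R`.
-/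

open Finset Real

namespace Real

theorem sinh_le_mul_cosh {t : ℝ} (ht : 0 ≤ t) : sinh t ≤ t * cosh t := by
  let f : ℝ → ℝ := fun s => s * cosh s - sinh s
  have hf : ∀ s, HasDerivAt f (s * sinh s) s := fun s =>
    (((hasDerivAt_id' s).mul (hasDerivAt_cosh s)).sub (hasDerivAt_sinh s)).congr_deriv (by ring)
  have hmono : MonotoneOn f (Set.Ici 0) := by
    refine monotoneOn_of_deriv_nonneg (convex_Ici 0)
      (fun s _ => (hf s).continuousAt.continuousWithinAt)
      (fun s _ => (hf s).differentiableAt.differentiableWithinAt) fun s hs => ?_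
    rw [interior_Ici, Set.mem_Ioi] at hs
    rw [(hf s).deriv]
    exact mul_nonneg hs.le (sinh_nonneg_iff.mpr hs.le)
  simpa [f] using hmono Set.self_mem_Ici (Set.mem_Ici.mpr ht) ht

theorem two_mul_cosh_sub_one_le_mul_sinh {x : ℝ} (hx : 0 ≤ x) :
    2 * (cosh x - 1) ≤ x * sinh x := by
  obtain ⟨t, rfl⟩ : ∃ t, x = 2 * t := ⟨x / 2, by ring⟩
  have ht : 0 ≤ t := by linarith
  have hs := sinh_le_mul_cosh ht
  have hs0 := sinh_nonneg_iff.mpr ht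
  rw [cosh_two_mul, sinh_two_mul, cosh_sq]
  nlinarith [mul_le_mul_of_nonneg_left hs hs0]

end Real

section MeanAbsDeviation

variable {ι : Type*} [Fintype ι] {p r : ι → ℝ} {L M : ℝ}

theorem wmean_mem_Icc (hp : ∀ k, 0 ≤ p k) (hp1 : ∑ k, p k = 1) (hr : ∀ k, r k ∈ Set.Icc L M) :
    ∑ k, p k * r k ∈ Set.Icc L M := by
  have hL : ∑ k, p k * r k - L = ∑ k, p k * (r k - L) := by
    simp only [mul_sub, sum_sub_distrib, ← sum_mul, hp1, one_mul]
  have hM : M - ∑ k, p k * r k = ∑ k, p k * (M - r k) := by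
    simp only [mul_sub, sum_sub_distrib, ← sum_mul, hp1, one_mul]
  constructor
  · have := sum_nonneg fun k (_ : k ∈ univ) => mul_nonneg (hp k) (sub_nonneg.mpr (hr k).1)
    linarith
  · have := sum_nonneg fun k (_ : k ∈ univ) => mul_nonneg (hp k) (sub_nonneg.mpr (hr k).2)
    linarith

theorem mul_sum_abs_sub_wmean_le (hp : ∀ k, 0 ≤ p k) (hp1 : ∑ k, p k = 1)
    (hr : ∀ k, r k ∈ Set.Icc L M) :
    (M - L) * ∑ k, p k * |r k - ∑ j, p j * r j|
      ≤ 2 * (M - ∑ j, p j * r j) * (∑ j, p j * r j - L) := by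
  set R := ∑ j, p j * r j
  obtain ⟨hRL, hRM⟩ := wmean_mem_Icc hp hp1 hr
  have chord : ∀ k, (M - L) * |r k - R| ≤ (M - r k) * (R - L) + (r k - L) * (M - R) := by
    intro k
    obtain ⟨hL, hM⟩ := hr k
    rcases le_total R (r k) with h | h
    · rw [abs_of_nonneg (sub_nonneg.mpr h)]; nlinarith
    · rw [abs_of_nonpos (sub_nonpos.mpr h)]; nlinarith
  have hsum : ∑ k, p k * ((M - r k) * (R - L) + (r k - L) * (M - R)) = 2 * (M - R) * (R - L) := by
    have e : ∀ k, p k * ((M - r k) * (R - L) + (r k - L) * (M - R))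
        = p k * (M * (R - L) - L * (M - R)) + p k * r k * ((M - R) - (R - L)) := fun k => by ring
    simp only [e, sum_add_distrib, ← sum_mul, hp1]
    ring
  rw [← hsum, mul_sum]
  exact sum_le_sum fun k _ => by
    simpa [mul_left_comm] using mul_le_mul_of_nonneg_left (chord k) (hp k)

theorem sum_mul_abs_sub_wmean_le_of_mem_Icc_exp (hp : ∀ k, 0 ≤ p k) (hp1 : ∑ k, p k = 1)
    {x : ℝ} (hx : 0 ≤ x) (hr : ∀ k, r k ∈ Set.Icc (exp (-x)) (exp x)) :
    ∑ k, p k * |r k - ∑ j, p j * r j| ≤ x * ∑ j, p j * r j := by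
  set R := ∑ j, p j * r j
  rcases hx.eq_or_lt with rfl | hx
  · have hr1 : ∀ k, r k = 1 := fun k => by
      simpa using le_antisymm (hr k).2 (by simpa using (hr k).1)
    simp [R, hr1, hp1]
  have hRpos : 0 < R := (exp_pos _).trans_le (wmean_mem_Icc hp hp1 hr).1
  have hML : exp x * exp (-x) = 1 := by rw [← exp_add, add_neg_cancel, exp_zero]
  have hgap : 0 < exp x - exp (-x) := sub_pos.mpr (exp_lt_exp.mpr (by linarith))
  have hcosh := two_mul_cosh_sub_one_le_mul_sinh hx.le
  rw [cosh_eq, sinh_eq] at hcosh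
  have hmad := mul_sum_abs_sub_wmean_le hp hp1 hr
  have hprod : (exp x - R) * (R - exp (-x)) ≤ R * (exp x + exp (-x) - 2) := by
    nlinarith [sq_nonneg (R - 1)]
  refine le_of_mul_le_mul_left ?_ hgap
  nlinarith [mul_le_mul_of_nonneg_left hcosh hRpos.le]

end MeanAbsDeviation

section ExpTilt

variable {ι : Type*} [Fintype ι]

/-- `MD(c, g, η) = expTilt c (-η • g)`. -/
noncomputable def expTilt (w a : ι → ℝ) (k : ι) : ℝ :=
  w k * exp (a k) / ∑ j, w j * exp (a j)

variable {w : ι → ℝ}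

theorem sum_mul_exp_pos [Nonempty ι] (hw : ∀ k, 0 < w k) (a : ι → ℝ) :
    0 < ∑ j, w j * exp (a j) :=
  sum_pos (fun j _ => mul_pos (hw j) (exp_pos _)) univ_nonempty

theorem expTilt_nonneg (hw : ∀ k, 0 ≤ w k) (a : ι → ℝ) (k : ι) : 0 ≤ expTilt w a k :=
  div_nonneg (mul_nonneg (hw k) (exp_pos _).le)
    (sum_nonneg fun j _ => mul_nonneg (hw j) (exp_pos _).le)

theorem sum_expTilt [Nonempty ι] (hw : ∀ k, 0 < w k) (a : ι → ℝ) : ∑ k, expTilt w a k = 1 := by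
  rw [← div_self (sum_mul_exp_pos hw a).ne', sum_div]
  rfl

theorem expTilt_expTilt [Nonempty ι] (hw : ∀ k, 0 < w k) (a b : ι → ℝ) :
    expTilt (expTilt w a) b = expTilt w (a + b) := by
  funext k
  have hZ := (sum_mul_exp_pos hw a).ne'
  unfold expTilt
  simp only [Pi.add_apply, exp_add, div_mul_eq_mul_div, ← sum_div, ← mul_assoc]
  rw [div_div_div_cancel_right₀ hZ]

theorem sum_abs_sub_expTilt_le {p b : ι → ℝ} (hp : ∀ k, 0 ≤ p k) (hp1 : ∑ k, p k = 1)
    {δ : ℝ} (hδ : 0 ≤ δ) (hb : ∀ k, |b k| ≤ δ) :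
    ∑ k, |p k - expTilt p b k| ≤ δ := by
  set R := ∑ j, p j * exp (b j)
  have hr : ∀ k, exp (b k) ∈ Set.Icc (exp (-δ)) (exp δ) := fun k =>
    ⟨exp_le_exp.mpr (neg_le_of_abs_le (hb k)), exp_le_exp.mpr (le_of_abs_le (hb k))⟩
  have hRpos : 0 < R := (exp_pos _).trans_le (wmean_mem_Icc hp hp1 hr).1
  have hterm : ∀ k, |p k - expTilt p b k| = p k * |exp (b k) - R| / R := fun k => by
    have e : p k - expTilt p b k = p k * (R - exp (b k)) / R := by
      change p k - p k * exp (b k) / R = _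
      field_simp
    rw [e, abs_div, abs_mul, abs_of_nonneg (hp k), abs_of_pos hRpos, abs_sub_comm]
  simp only [hterm, ← sum_div]
  rw [div_le_iff₀ hRpos]
  exact sum_mul_abs_sub_wmean_le_of_mem_Icc_exp hp hp1 hδ hr

theorem sum_abs_expTilt_sub_expTilt_le (hw : ∀ k, 0 < w k) {a b : ι → ℝ} {δ : ℝ} (hδ : 0 ≤ δ)
    (hab : ∀ k, |a k - b k| ≤ δ) :
    ∑ k, |expTilt w a k - expTilt w b k| ≤ δ := by
  cases isEmpty_or_nonempty ι
  · simpa using hδ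
  rw [← add_sub_cancel a b, ← expTilt_expTilt hw]
  exact sum_abs_sub_expTilt_le (expTilt_nonneg (fun k => (hw k).le) a) (sum_expTilt hw a) hδ
    fun k => by simpa [abs_sub_comm] using hab k

end ExpTilt

theorem stmt_7_general (K : ℕ) (c : Fin K → ℝ)
    (hpos : ∀ k, 0 < c k) (η : ℝ) (hη : 0 < η) (g g' : Fin K → ℝ)
    (cplus cplus' : Fin K → ℝ)
    (hcplus : ∀ k, cplus k
      = c k * Real.exp (-η * g k) / ∑ j, c j * Real.exp (-η * g j))
    (hcplus' : ∀ k, cplus' k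
      = c k * Real.exp (-η * g' k) / ∑ j, c j * Real.exp (-η * g' j)) :
    (1 / η) * ∑ k, |cplus k - cplus' k| ≤ ⨆ k, |g k - g' k| := by
  set δ := ⨆ k, |g k - g' k|
  have hδ : ∀ k, |g k - g' k| ≤ δ := le_ciSup (Finite.bddAbove_range _)
  have hMD : cplus = expTilt c (fun k => -η * g k) := funext hcplus
  have hMD' : cplus' = expTilt c (fun k => -η * g' k) := funext hcplus'
  have hdist := sum_abs_expTilt_sub_expTilt_le hpos (a := fun k => -η * g k)
    (b := fun k => -η * g' k)
    (mul_nonneg hη.le (Real.iSup_nonneg fun k => abs_nonneg (g k - g' k))) fun k => by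
      rw [← mul_sub, neg_mul, abs_neg, abs_mul, abs_of_pos hη]
      exact mul_le_mul_of_nonneg_left (hδ k) hη.le
  rw [hMD, hMD', one_div, inv_mul_le_iff₀ hη]
  exact hdist

/-- Nonexpansiveness of the entropic mirror descent step (Dang–Lan):
(1/η)‖MD(c,g,η) − MD(c,g',η)‖₁ ≤ ‖g − g'‖_∞. -/
theorem stmt_7 (K : ℕ) (c : Fin K → ℝ) (hc : c ∈ stdSimplex ℝ (Fin K))
    (hpos : ∀ k, 0 < c k) (η : ℝ) (hη : 0 < η) (g g' : Fin K → ℝ)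
    (cplus cplus' : Fin K → ℝ)
    (hcplus : ∀ k, cplus k
      = c k * Real.exp (-η * g k) / ∑ j, c j * Real.exp (-η * g j))
    (hcplus' : ∀ k, cplus' k
      = c k * Real.exp (-η * g' k) / ∑ j, c j * Real.exp (-η * g' j)) :
    (1 / η) * ∑ k, |cplus k - cplus' k| ≤ ⨆ k, |g k - g' k| :=
  stmt_7_general K c hpos η hη g g' cplus cplus' hcplus hcplus'
end

section
/- Let f : ℝ^d → ℝ be differentiable with L-Lipschitz gradient (‖∇f(x) − ∇f(y)‖ ≤ L‖x − y‖ for all x, y), let E be a positive integer, and let 0 < η ≤ 1/(2EL). Define the local gradient descent iterates θ_0 = θ and θ_{τ+1} = θ_τ − η ∇f(θ_τ) for 0 ≤ τ < E. Then Σ_{τ=0}^{E−1} ‖θ_τ − θ‖² ≤ 16 E³ η² ‖∇f(θ)‖², where ‖·‖ is the Euclidean norm. -/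
/-!
Each step moves the iterate by `η‖∇f(θ_τ)‖ ≤ η (L‖θ_τ − θ‖ + ‖∇f(θ)‖)`, so the drift
`D_τ = ‖θ_τ − θ‖` obeys `D_{τ+1} ≤ (1 + ηL) D_τ + η‖∇f(θ)‖`. Since `2EηL ≤ 1`, the
extra term `ηL D_τ` never exceeds `η‖∇f(θ)‖`, and induction gives `D_τ ≤ 2ητ‖∇f(θ)‖`.
Squaring and summing over `τ < E` yields `4E³η²‖∇f(θ)‖²`.
-/

open Finset

section GradientStep

variable {V : Type*} [SeminormedAddCommGroup V] [NormedSpace ℝ V]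

theorem norm_sub_smul_sub_le {g : V → V} {L η : ℝ} {x x₀ : V} (hη : 0 ≤ η)
    (hg : ‖g x - g x₀‖ ≤ L * ‖x - x₀‖) :
    ‖x - η • g x - x₀‖ ≤ (1 + η * L) * ‖x - x₀‖ + η * ‖g x₀‖ := by
  have hgx : ‖g x‖ ≤ L * ‖x - x₀‖ + ‖g x₀‖ := by
    linarith [norm_le_norm_add_norm_sub' (g x) (g x₀)]
  calc ‖x - η • g x - x₀‖ = ‖(x - x₀) - η • g x‖ := by rw [sub_right_comm]
    _ ≤ ‖x - x₀‖ + η * ‖g x‖ := 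
      (norm_sub_le _ _).trans_eq (by rw [norm_smul, Real.norm_of_nonneg hη])
    _ ≤ ‖x - x₀‖ + η * (L * ‖x - x₀‖ + ‖g x₀‖) := by gcongr
    _ = (1 + η * L) * ‖x - x₀‖ + η * ‖g x₀‖ := by ring

theorem le_two_mul_of_le_one_add_mul_add {D : ℕ → ℝ} {a b : ℝ} {n : ℕ} (ha : 0 ≤ a)
    (hb : 0 ≤ b) (hn : 2 * n * a ≤ 1) (h0 : D 0 = 0)
    (hD : ∀ τ < n, D (τ + 1) ≤ (1 + a) * D τ + b) : ∀ τ ≤ n, D τ ≤ 2 * b * τ := by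
  intro τ
  induction τ with
  | zero => simp [h0]
  | succ τ ih =>
    intro hτ
    replace hτ : τ < n := hτ
    have hτn : (τ : ℝ) ≤ n := by exact_mod_cast hτ.le
    have h2τa : 2 * τ * a ≤ 1 := by nlinarith
    calc D (τ + 1) ≤ (1 + a) * D τ + b := hD τ hτ
      _ ≤ (1 + a) * (2 * b * τ) + b := by gcongr; exact ih hτ.le
      _ = 2 * b * τ + b * (2 * τ * a + 1) := by ring
      _ ≤ 2 * b * τ + b * 2 := by gcongr; linarith
      _ = 2 * b * ↑(τ + 1) := by push_cast; ring

theorem norm_gradientDescent_sub_le {g : V → V} {θ : ℕ → V} {L η : ℝ} {n : ℕ}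
    (hη : 0 ≤ η) (hL : 0 ≤ L) (hηL : 2 * n * (η * L) ≤ 1)
    (hg : ∀ x, ‖g x - g (θ 0)‖ ≤ L * ‖x - θ 0‖)
    (hstep : ∀ τ < n, θ (τ + 1) = θ τ - η • g (θ τ)) :
    ∀ τ ≤ n, ‖θ τ - θ 0‖ ≤ 2 * (η * ‖g (θ 0)‖) * τ :=
  le_two_mul_of_le_one_add_mul_add (mul_nonneg hη hL) (by positivity) hηL (by simp)
    fun τ hτ => hstep τ hτ ▸ norm_sub_smul_sub_le hη (hg (θ τ))

end GradientStep

theorem stmt_10_general (d : ℕ) (f : EuclideanSpace ℝ (Fin d) → ℝ) (L : ℝ)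
    (hLip : ∀ x y, ‖gradient f x - gradient f y‖ ≤ L * ‖x - y‖)
    (E : ℕ) (η : ℝ) (hη : 0 < η)
    (hη2 : η ≤ 1 / (2 * (E : ℝ) * L))
    (θ0 : EuclideanSpace ℝ (Fin d)) (θ : ℕ → EuclideanSpace ℝ (Fin d))
    (h0 : θ 0 = θ0)
    (hstep : ∀ τ, τ < E → θ (τ + 1) = θ τ - η • gradient f (θ τ)) :
    ∑ τ ∈ Finset.range E, ‖θ τ - θ0‖ ^ 2
      ≤ 16 * (E : ℝ) ^ 3 * η ^ 2 * ‖gradient f θ0‖ ^ 2 := by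
  subst h0
  set G := ‖gradient f (θ 0)‖
  -- `1 / (2EL)` is `0` unless `2EL > 0`, and `η > 0` rules that out
  have hEL : 0 < 2 * (E : ℝ) * L := by
    by_contra! h
    linarith [one_div_nonpos.mpr h]
  have hL : 0 ≤ L := by nlinarith [(Nat.cast_nonneg E : (0 : ℝ) ≤ E)]
  have hηL : 2 * E * (η * L) ≤ 1 := by
    rw [le_div_iff₀ hEL] at hη2; linarith
  have hdrift := norm_gradientDescent_sub_le hη.le hL hηL (fun x => hLip x (θ 0)) hstep
  calc ∑ τ ∈ range E, ‖θ τ - θ 0‖ ^ 2 ≤ ∑ _τ ∈ range E, (2 * (η * G) * E) ^ 2 := by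
        refine sum_le_sum fun τ hτ => ?_
        have hτE : (τ : ℝ) ≤ E := by exact_mod_cast (mem_range.mp hτ).le
        gcongr
        exact (hdrift τ (mem_range.mp hτ).le).trans (by gcongr)
    _ = 4 * (E : ℝ) ^ 3 * η ^ 2 * G ^ 2 := by
        rw [sum_const, card_range, nsmul_eq_mul]; ring
    _ ≤ 16 * (E : ℝ) ^ 3 * η ^ 2 * G ^ 2 := by gcongr; norm_num

/-- Client-drift bound (Lemma O4, full-gradient case): after E local gradient
descent steps with step size η ≤ 1/(2EL) on an L-smooth objective,
Σ_{τ<E} ‖θ_τ − θ‖² ≤ 16E³η²‖∇f(θ)‖². -/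
theorem stmt_10 (d : ℕ) (f : EuclideanSpace ℝ (Fin d) → ℝ) (L : ℝ)
    (hdiff : Differentiable ℝ f)
    (hLip : ∀ x y, ‖gradient f x - gradient f y‖ ≤ L * ‖x - y‖)
    (E : ℕ) (hE : 0 < E) (η : ℝ) (hη : 0 < η)
    (hη2 : η ≤ 1 / (2 * (E : ℝ) * L))
    (θ0 : EuclideanSpace ℝ (Fin d)) (θ : ℕ → EuclideanSpace ℝ (Fin d))
    (h0 : θ 0 = θ0)
    (hstep : ∀ τ, τ < E → θ (τ + 1) = θ τ - η • gradient f (θ τ)) :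
    ∑ τ ∈ Finset.range E, ‖θ τ - θ0‖ ^ 2
      ≤ 16 * (E : ℝ) ^ 3 * η ^ 2 * ‖gradient f θ0‖ ^ 2 :=
  stmt_10_general d f L hLip E η hη hη2 θ0 θ h0 hstep
end

section
/- Let f₁,…,f_M : ℝ^d → ℝ be differentiable, each with L₁-Lipschitz gradient, let p₁,…,p_M ≥ 0 satisfy Σ_i p_i = 1, and set F = Σ_{i=1}^M p_i f_i. Let E be a positive integer and η > 0. For each client i define the local iterates θ_{i,0} = θ⁰ and θ_{i,τ+1} = θ_{i,τ} − η ∇f_i(θ_{i,τ}) for 0 ≤ τ < E, and define the aggregated update θ⁺ = θ⁰ − η Σ_{i=1}^M p_i Σ_{τ=0}^{E−1} ∇f_i(θ_{i,τ}). Then ‖θ⁺ − θ⁰‖² ≤ 2 E η² L₁² Σ_{i=1}^M p_i Σ_{τ=0}^{E−1} ‖θ_{i,τ} − θ⁰‖² + 2 E² η² ‖∇F(θ⁰)‖², where ‖·‖ is the Euclidean norm. -/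
/-!
Split each client's accumulated gradient into its drift `∇fᵢ(θᵢ,τ) − ∇fᵢ(θ⁰)` plus `E ∇fᵢ(θ⁰)`;
the weighted sum of the second parts is `E ∇F(θ⁰)`. Then `‖a + b‖² ≤ 2‖a‖² + 2‖b‖²`, and the drift
term is controlled by Jensen's inequality in the weights `pᵢ`, Cauchy–Schwarz over the `E` local
steps, and the Lipschitz bound on each gradient.
-/

open Finset

section NormSq

variable {V : Type*} [SeminormedAddCommGroup V]

theorem norm_add_sq_le_two_mul (a b : V) : ‖a + b‖ ^ 2 ≤ 2 * (‖a‖ ^ 2 + ‖b‖ ^ 2) :=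
  (pow_le_pow_left₀ (norm_nonneg _) (norm_add_le a b) 2).trans add_sq_le

theorem norm_sum_sq_le_card_mul {ι : Type*} (s : Finset ι) (x : ι → V) :
    ‖∑ i ∈ s, x i‖ ^ 2 ≤ #s * ∑ i ∈ s, ‖x i‖ ^ 2 :=
  (pow_le_pow_left₀ (norm_nonneg _) (norm_sum_le s x) 2).trans (sq_sum_le_card_mul_sum_sq ..)

theorem norm_sum_smul_sq_le [NormedSpace ℝ V] {ι : Type*} (s : Finset ι) {w : ι → ℝ}
    (hw : ∀ i ∈ s, 0 ≤ w i) (hw₁ : ∑ i ∈ s, w i = 1) (x : ι → V) :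
    ‖∑ i ∈ s, w i • x i‖ ^ 2 ≤ ∑ i ∈ s, w i * ‖x i‖ ^ 2 := by
  have hnorm : ‖∑ i ∈ s, w i • x i‖ ≤ ∑ i ∈ s, w i * ‖x i‖ :=
    (norm_sum_le _ _).trans_eq <| sum_congr rfl fun i hi => by
      rw [norm_smul, Real.norm_of_nonneg (hw i hi)]
  exact (pow_le_pow_left₀ (norm_nonneg _) hnorm 2).trans
    (Real.pow_arith_mean_le_arith_mean_pow s w _ hw hw₁ (fun i _ => norm_nonneg _) 2)

theorem norm_sum_smul_sum_sq_le [NormedSpace ℝ V] {ι κ : Type*} (s : Finset ι) (t : Finset κ)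
    {w : ι → ℝ} (hw : ∀ i ∈ s, 0 ≤ w i) (hw₁ : ∑ i ∈ s, w i = 1) (x : ι → κ → V) :
    ‖∑ i ∈ s, w i • ∑ j ∈ t, x i j‖ ^ 2 ≤ #t * ∑ i ∈ s, w i * ∑ j ∈ t, ‖x i j‖ ^ 2 :=
  calc ‖∑ i ∈ s, w i • ∑ j ∈ t, x i j‖ ^ 2
      ≤ ∑ i ∈ s, w i * ‖∑ j ∈ t, x i j‖ ^ 2 := norm_sum_smul_sq_le s hw hw₁ _
    _ ≤ ∑ i ∈ s, w i * (#t * ∑ j ∈ t, ‖x i j‖ ^ 2) :=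
        sum_le_sum fun i hi => mul_le_mul_of_nonneg_left (norm_sum_sq_le_card_mul t _) (hw i hi)
    _ = #t * ∑ i ∈ s, w i * ∑ j ∈ t, ‖x i j‖ ^ 2 := by
        rw [mul_sum]; exact sum_congr rfl fun i _ => by ring

end NormSq

theorem sum_smul_sum_eq_sum_smul_sum_sub_add {ι κ V : Type*} [AddCommGroup V] [Module ℝ V]
    (s : Finset ι) (t : Finset κ) (w : ι → ℝ) (x : ι → κ → V) (y : ι → V) :
    ∑ i ∈ s, w i • ∑ j ∈ t, x i j
      = ∑ i ∈ s, w i • ∑ j ∈ t, (x i j - y i) + (#t : ℝ) • ∑ i ∈ s, w i • y i := by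
  rw [smul_sum, ← sum_add_distrib]
  refine sum_congr rfl fun i _ => ?_
  rw [sum_sub_distrib, sum_const, ← Nat.cast_smul_eq_nsmul ℝ, smul_comm (#t : ℝ), ← smul_add,
    sub_add_cancel]

theorem gradient_sum_mul {E ι : Type*} [NormedAddCommGroup E] [InnerProductSpace ℝ E]
    [CompleteSpace E] (s : Finset ι) (c : ι → ℝ) {f : ι → E → ℝ} {x : E}
    (hf : ∀ i ∈ s, DifferentiableAt ℝ (f i) x) :
    gradient (fun y => ∑ i ∈ s, c i * f i y) x = ∑ i ∈ s, c i • gradient (f i) x := by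
  refine HasGradientAt.gradient ?_
  rw [hasGradientAt_iff_hasFDerivAt, map_sum]
  refine HasFDerivAt.fun_sum fun i hi => ?_
  rw [map_smulₛₗ, RCLike.conj_to_real]
  exact (hf i hi).hasGradientAt.hasFDerivAt.const_mul (c i)

theorem stmt_11_general (d M : ℕ) (f : Fin M → EuclideanSpace ℝ (Fin d) → ℝ) (L₁ : ℝ)
    (hdiff : ∀ i, Differentiable ℝ (f i))
    (hLip : ∀ i x y, ‖gradient (f i) x - gradient (f i) y‖ ≤ L₁ * ‖x - y‖)
    (p : Fin M → ℝ) (hp : ∀ i, 0 ≤ p i) (hpsum : ∑ i, p i = 1)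
    (F : EuclideanSpace ℝ (Fin d) → ℝ) (hF : ∀ θ, F θ = ∑ i, p i * f i θ)
    (E : ℕ) (η : ℝ)
    (θ0 : EuclideanSpace ℝ (Fin d)) (θloc : Fin M → ℕ → EuclideanSpace ℝ (Fin d))
    (θplus : EuclideanSpace ℝ (Fin d))
    (hθplus : θplus
      = θ0 - η • ∑ i, p i • ∑ τ ∈ Finset.range E, gradient (f i) (θloc i τ)) :
    ‖θplus - θ0‖ ^ 2
      ≤ 2 * (E : ℝ) * η ^ 2 * L₁ ^ 2
          * ∑ i, p i * ∑ τ ∈ Finset.range E, ‖θloc i τ - θ0‖ ^ 2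
        + 2 * (E : ℝ) ^ 2 * η ^ 2 * ‖gradient F θ0‖ ^ 2 := by
  obtain rfl : F = fun θ => ∑ i, p i * f i θ := funext hF
  set g := gradient (fun θ => ∑ i, p i * f i θ) θ0
  have hg : g = ∑ i, p i • gradient (f i) θ0 := gradient_sum_mul _ p fun i _ => hdiff i θ0
  set drift := ∑ i, p i • ∑ τ ∈ range E, (gradient (f i) (θloc i τ) - gradient (f i) θ0)
  have hgap : θplus - θ0 = -(η • (drift + (E : ℝ) • g)) := by
    rw [hθplus, hg, sum_smul_sum_eq_sum_smul_sum_sub_add, card_range]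
    abel
  have hdrift : ‖drift‖ ^ 2 ≤ E * (L₁ ^ 2 * ∑ i, p i * ∑ τ ∈ range E, ‖θloc i τ - θ0‖ ^ 2) := by
    calc ‖drift‖ ^ 2
        ≤ E * ∑ i, p i * ∑ τ ∈ range E, ‖gradient (f i) (θloc i τ) - gradient (f i) θ0‖ ^ 2 := by
          simpa using norm_sum_smul_sum_sq_le _ (range E) (fun i _ => hp i) hpsum _
      _ ≤ E * ∑ i, p i * ∑ τ ∈ range E, (L₁ * ‖θloc i τ - θ0‖) ^ 2 := by
          gcongr with i _ τ _
          exacts [hp i, hLip i _ _]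
      _ = E * (L₁ ^ 2 * ∑ i, p i * ∑ τ ∈ range E, ‖θloc i τ - θ0‖ ^ 2) := by
          simp only [mul_pow, ← mul_sum, mul_left_comm (p _)]
  calc ‖θplus - θ0‖ ^ 2 = η ^ 2 * ‖drift + (E : ℝ) • g‖ ^ 2 := by
        rw [hgap, norm_neg, norm_smul, mul_pow, Real.norm_eq_abs, sq_abs]
    _ ≤ η ^ 2 * (2 * (‖drift‖ ^ 2 + ‖(E : ℝ) • g‖ ^ 2)) := by
        gcongr; exact norm_add_sq_le_two_mul _ _
    _ ≤ η ^ 2 * (2 * (E * (L₁ ^ 2 * ∑ i, p i * ∑ τ ∈ range E, ‖θloc i τ - θ0‖ ^ 2)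
          + ((E : ℝ) * ‖g‖) ^ 2)) := by
        rw [norm_smul, Real.norm_natCast]; gcongr
    _ = _ := by ring

/-- Aggregated-update gap bound (Lemma O3, full-gradient case): in federated
averaging with E local gradient steps per client,
‖θ⁺ − θ⁰‖² ≤ 2Eη²L₁² Σᵢ pᵢ Σ_{τ<E} ‖θ_{i,τ} − θ⁰‖² + 2E²η²‖∇F(θ⁰)‖². -/
theorem stmt_11 (d M : ℕ) (f : Fin M → EuclideanSpace ℝ (Fin d) → ℝ) (L₁ : ℝ)
    (hdiff : ∀ i, Differentiable ℝ (f i))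
    (hLip : ∀ i x y, ‖gradient (f i) x - gradient (f i) y‖ ≤ L₁ * ‖x - y‖)
    (p : Fin M → ℝ) (hp : ∀ i, 0 ≤ p i) (hpsum : ∑ i, p i = 1)
    (F : EuclideanSpace ℝ (Fin d) → ℝ) (hF : ∀ θ, F θ = ∑ i, p i * f i θ)
    (E : ℕ) (hE : 0 < E) (η : ℝ) (hη : 0 < η)
    (θ0 : EuclideanSpace ℝ (Fin d)) (θloc : Fin M → ℕ → EuclideanSpace ℝ (Fin d))
    (h0 : ∀ i, θloc i 0 = θ0)
    (hstep : ∀ i τ, τ < E →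
      θloc i (τ + 1) = θloc i τ - η • gradient (f i) (θloc i τ))
    (θplus : EuclideanSpace ℝ (Fin d))
    (hθplus : θplus
      = θ0 - η • ∑ i, p i • ∑ τ ∈ Finset.range E, gradient (f i) (θloc i τ)) :
    ‖θplus - θ0‖ ^ 2
      ≤ 2 * (E : ℝ) * η ^ 2 * L₁ ^ 2
          * ∑ i, p i * ∑ τ ∈ Finset.range E, ‖θloc i τ - θ0‖ ^ 2
        + 2 * (E : ℝ) ^ 2 * η ^ 2 * ‖gradient F θ0‖ ^ 2 :=
  stmt_11_general d M f L₁ hdiff hLip p hp hpsum F hF E η θ0 θloc θplus hθplus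
end

section
/- Let f₁,…,f_M : ℝ^d → ℝ be differentiable, each with L₁-Lipschitz gradient, let p₁,…,p_M ≥ 0 satisfy Σ_i p_i = 1, and set F = Σ_{i=1}^M p_i f_i. Assume bounded gradient diversity: there is δ ≥ 0 with Σ_{i=1}^M p_i ‖∇f_i(θ) − ∇F(θ)‖² ≤ δ² for all θ ∈ ℝ^d. Let E be a positive integer and 0 < η ≤ 1/(2EL₁). Define θ_{i,0} = θ⁰, θ_{i,τ+1} = θ_{i,τ} − η ∇f_i(θ_{i,τ}) for 0 ≤ τ < E, and θ⁺ = θ⁰ − η Σ_i p_i Σ_{τ=0}^{E−1} ∇f_i(θ_{i,τ}). Then F(θ⁺) − F(θ⁰) ≤ −(Eη/2)(1 − 2EηL₁ − 64E²η²L₁²) ‖∇F(θ⁰)‖² + 32 E³ η³ L₁² δ², where ‖·‖ is the Euclidean norm. -/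
/-!
Write the aggregated update as `θ⁺ = θ⁰ - η (E ∇F(θ⁰) + Δ)`, where `Δ` collects the drift
`∇fᵢ(θᵢ,τ) - ∇fᵢ(θ⁰)` of the local gradients. Since `2EηL₁ ≤ 1`, the local trajectory of client
`i` stays within `2ηE ‖∇fᵢ(θ⁰)‖` of `θ⁰`, so `‖Δ‖ ≤ 2ηE²L₁ Σ pᵢ ‖∇fᵢ(θ⁰)‖`, and by Jensen and
bounded gradient diversity `Σ pᵢ ‖∇fᵢ(θ⁰)‖ ≤ |δ| + ‖∇F(θ⁰)‖`. The descent lemma for the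
`L₁`-smooth `F`, applied to this inexact gradient step with Young's inequality on the cross
term `⟪∇F(θ⁰), Δ⟫`, gives the bound.
-/

open Finset

section Smooth

open InnerProductSpace

variable {H : Type*} [NormedAddCommGroup H] [InnerProductSpace ℝ H] [CompleteSpace H]

theorem hasDerivAt_apply_add_smul {F : H → ℝ} (hF : Differentiable ℝ F) (x v : H) (t : ℝ) :
    HasDerivAt (fun s : ℝ => F (x + s • v)) ⟪gradient F (x + t • v), v⟫_ℝ t := by
  have hline : HasDerivAt (fun s : ℝ => x + s • v) v t := by
    simpa using ((hasDerivAt_id t).smul_const v).const_add x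
  have := (hasGradientAt_iff_hasFDerivAt.mp (hF (x + t • v)).hasGradientAt).comp_hasDerivAt t hline
  rwa [toDual_apply_apply] at this

theorem apply_add_le_of_lipschitz_gradient {F : H → ℝ} {L : ℝ} (hF : Differentiable ℝ F)
    (hL : ∀ x y, ‖gradient F x - gradient F y‖ ≤ L * ‖x - y‖) (x v : H) :
    F (x + v) ≤ F x + ⟪gradient F x, v⟫_ℝ + L / 2 * ‖v‖ ^ 2 := by
  set c := ⟪gradient F x, v⟫_ℝ
  set h : ℝ → ℝ := fun t => F (x + t • v) - t * c - L / 2 * t ^ 2 * ‖v‖ ^ 2 with h_def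
  have hh t : HasDerivAt h (⟪gradient F (x + t • v), v⟫_ℝ - c - L * t * ‖v‖ ^ 2) t :=
    ((hasDerivAt_apply_add_smul hF x v t).fun_sub ((hasDerivAt_id' t).mul_const c)).fun_sub
      (((hasDerivAt_pow 2 t).const_mul (L / 2)).mul_const (‖v‖ ^ 2)) |>.congr_deriv (by ring)
  have hslope t (ht : 0 < t) : ⟪gradient F (x + t • v), v⟫_ℝ - c ≤ L * t * ‖v‖ ^ 2 :=
    calc ⟪gradient F (x + t • v), v⟫_ℝ - c
        = ⟪gradient F (x + t • v) - gradient F x, v⟫_ℝ := (inner_sub_left _ _ _).symm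
      _ ≤ ‖gradient F (x + t • v) - gradient F x‖ * ‖v‖ := real_inner_le_norm _ _
      _ ≤ L * ‖x + t • v - x‖ * ‖v‖ := by gcongr; exact hL _ _
      _ = L * t * ‖v‖ ^ 2 := by
        rw [add_sub_cancel_left, norm_smul, Real.norm_of_nonneg ht.le]; ring
  have hanti : AntitoneOn h (Set.Icc 0 1) := by
    refine antitoneOn_of_deriv_nonpos (convex_Icc 0 1)
      (HasDerivAt.continuousOn fun t _ => hh t)
      (fun t _ => (hh t).differentiableAt.differentiableWithinAt) fun t ht => ?_
    rw [interior_Icc] at ht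
    rw [(hh t).deriv]
    linarith [hslope t ht.1]
  have h01 := hanti (Set.left_mem_Icc.2 zero_le_one) (Set.right_mem_Icc.2 zero_le_one) zero_le_one
  have h0 : h 0 = F x := by simp [h_def]
  have h1 : h 1 = F (x + v) - c - L / 2 * ‖v‖ ^ 2 := by simp [h_def]
  linarith

theorem apply_sub_smul_le_of_lipschitz_gradient {F : H → ℝ} {L η c : ℝ}
    (hF : Differentiable ℝ F) (hL : ∀ x y, ‖gradient F x - gradient F y‖ ≤ L * ‖x - y‖)
    (hL0 : 0 ≤ L) (hη : 0 ≤ η) (hc : 0 < c) (hsmall : 2 * c * η * L ≤ 1) (x Δ : H) :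
    F (x - η • (c • gradient F x + Δ)) - F x
      ≤ -(c * η / 2) * ‖gradient F x‖ ^ 2 + c ^ 2 * η ^ 2 * L * ‖gradient F x‖ ^ 2
        + η / c * ‖Δ‖ ^ 2 := by
  set g := gradient F x
  have hdesc := apply_add_le_of_lipschitz_gradient hF hL x (-(η • (c • g + Δ)))
  rw [← sub_eq_add_neg, inner_neg_right, real_inner_smul_right, inner_add_right,
    real_inner_smul_right, real_inner_self_eq_norm_sq, norm_neg, norm_smul,
    Real.norm_of_nonneg hη] at hdesc
  have hinner : -⟪g, Δ⟫_ℝ ≤ c / 2 * ‖g‖ ^ 2 + ‖Δ‖ ^ 2 / (2 * c) := by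
    have hsq : c / 2 * ‖g‖ ^ 2 + ‖Δ‖ ^ 2 / (2 * c) - ‖g‖ * ‖Δ‖
        = (c * ‖g‖ - ‖Δ‖) ^ 2 / (2 * c) := by
      field_simp; ring
    have : 0 ≤ (c * ‖g‖ - ‖Δ‖) ^ 2 / (2 * c) := by positivity
    linarith [neg_le_of_abs_le (abs_real_inner_le_norm g Δ)]
  have hnorm : ‖c • g + Δ‖ ^ 2 ≤ 2 * c ^ 2 * ‖g‖ ^ 2 + 2 * ‖Δ‖ ^ 2 := by
    have := norm_add_le (c • g) Δ
    rw [norm_smul, Real.norm_of_nonneg hc.le] at this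
    nlinarith [norm_nonneg (c • g + Δ), sq_nonneg (c * ‖g‖ - ‖Δ‖)]
  have hsmallΔ : L * η ^ 2 * ‖Δ‖ ^ 2 ≤ η / (2 * c) * ‖Δ‖ ^ 2 := by
    have hgap : η / (2 * c) * ‖Δ‖ ^ 2 - L * η ^ 2 * ‖Δ‖ ^ 2
        = η * ‖Δ‖ ^ 2 * (1 - 2 * c * η * L) / (2 * c) := by
      field_simp
    have : 0 ≤ η * ‖Δ‖ ^ 2 * (1 - 2 * c * η * L) / (2 * c) :=
      div_nonneg (mul_nonneg (by positivity) (by linarith)) (by positivity)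
    linarith
  have hquad : L / 2 * (η * ‖c • g + Δ‖) ^ 2
      ≤ L / 2 * η ^ 2 * (2 * c ^ 2 * ‖g‖ ^ 2 + 2 * ‖Δ‖ ^ 2) := by
    rw [mul_pow, ← mul_assoc]; gcongr
  have hcross : η * (-⟪g, Δ⟫_ℝ) ≤ η * (c / 2 * ‖g‖ ^ 2 + ‖Δ‖ ^ 2 / (2 * c)) := by gcongr
  have hsplit : η * (‖Δ‖ ^ 2 / (2 * c)) + η / (2 * c) * ‖Δ‖ ^ 2 = η / c * ‖Δ‖ ^ 2 := by
    field_simp; ring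
  linarith

end Smooth

section WeightedSum

variable {ι : Type*} [Fintype ι] {p : ι → ℝ}

theorem sum_smul_sum_range_eq_smul_add {W : Type*} [AddCommGroup W] [Module ℝ W]
    (p : ι → ℝ) (v : ι → ℕ → W) (w : ι → W) (E : ℕ) :
    ∑ i, p i • ∑ τ ∈ range E, v i τ
      = (E : ℝ) • ∑ i, p i • w i + ∑ i, p i • ∑ τ ∈ range E, (v i τ - w i) := by
  rw [Finset.smul_sum, ← sum_add_distrib]
  refine sum_congr rfl fun i _ => ?_
  rw [sum_sub_distrib, sum_const, card_range, ← Nat.cast_smul_eq_nsmul ℝ, smul_comm, smul_sub]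
  abel

theorem sum_mul_le_abs_of_sum_mul_sq_le (hp : ∀ i, 0 ≤ p i) (hpsum : ∑ i, p i = 1)
    {a : ι → ℝ} {δ : ℝ} (h : ∑ i, p i * a i ^ 2 ≤ δ ^ 2) : ∑ i, p i * a i ≤ |δ| := by
  have hjensen : (∑ i, p i * a i) ^ 2 ≤ ∑ i, p i * a i ^ 2 :=
    (even_two.convexOn_pow (𝕜 := ℝ)).map_sum_le (fun i _ => hp i) hpsum (fun i _ => trivial)
  exact (le_abs_self _).trans (sq_le_sq.mp (hjensen.trans h))

variable {V : Type*} [SeminormedAddCommGroup V]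

theorem norm_sum_smul_le [NormedSpace ℝ V] (hp : ∀ i, 0 ≤ p i) (v : ι → V) :
    ‖∑ i, p i • v i‖ ≤ ∑ i, p i * ‖v i‖ :=
  norm_sum_le_of_le _ fun i _ => by rw [norm_smul, Real.norm_of_nonneg (hp i)]

theorem sum_mul_norm_le_of_sum_mul_norm_sub_sq_le (hp : ∀ i, 0 ≤ p i) (hpsum : ∑ i, p i = 1)
    {v : ι → V} {w : V} {δ : ℝ} (h : ∑ i, p i * ‖v i - w‖ ^ 2 ≤ δ ^ 2) :
    ∑ i, p i * ‖v i‖ ≤ |δ| + ‖w‖ :=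
  calc ∑ i, p i * ‖v i‖ ≤ ∑ i, p i * (‖v i - w‖ + ‖w‖) :=
        sum_le_sum fun i _ => mul_le_mul_of_nonneg_left (norm_le_norm_sub_add _ _) (hp i)
    _ = ∑ i, p i * ‖v i - w‖ + ‖w‖ := by
        simp only [mul_add, sum_add_distrib, ← sum_mul, hpsum, one_mul]
    _ ≤ |δ| + ‖w‖ := by gcongr; exact sum_mul_le_abs_of_sum_mul_sq_le hp hpsum h

theorem norm_sum_smul_sub_le {W : Type*} [SeminormedAddCommGroup W] [NormedSpace ℝ W]
    (hp : ∀ i, 0 ≤ p i) (hpsum : ∑ i, p i = 1) {g : ι → V → W} {L : ℝ}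
    (hg : ∀ i x y, ‖g i x - g i y‖ ≤ L * ‖x - y‖) (x y : V) :
    ‖∑ i, p i • g i x - ∑ i, p i • g i y‖ ≤ L * ‖x - y‖ :=
  calc ‖∑ i, p i • g i x - ∑ i, p i • g i y‖ = ‖∑ i, p i • (g i x - g i y)‖ := by
        simp only [smul_sub, sum_sub_distrib]
    _ ≤ ∑ i, p i * (L * ‖x - y‖) :=
        (norm_sum_smul_le hp _).trans (sum_le_sum fun i _ => by gcongr; exacts [hp i, hg i x y])
    _ = L * ‖x - y‖ := by rw [← sum_mul, hpsum, one_mul]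

end WeightedSum

theorem hasGradientAt_sum_mul {H : Type*} [NormedAddCommGroup H] [InnerProductSpace ℝ H]
    [CompleteSpace H] {ι : Type*} [Fintype ι] (p : ι → ℝ) {f : ι → H → ℝ}
    (hf : ∀ i, Differentiable ℝ (f i)) (x : H) :
    HasGradientAt (fun y => ∑ i, p i * f i y) (∑ i, p i • gradient (f i) x) x := by
  rw [hasGradientAt_iff_hasFDerivAt]
  simp only [map_sum, map_smul, toDual_gradient]
  exact HasFDerivAt.fun_sum fun i _ => (hf i x).hasFDerivAt.const_mul (p i)

section GradientSteps

variable {V : Type*} [SeminormedAddCommGroup V] [NormedSpace ℝ V] {g : V → V} {L η : ℝ}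
  {E : ℕ} {x : ℕ → V}

theorem norm_sub_le_of_gradient_steps (hL : 0 ≤ L) (hη : 0 ≤ η)
    (hg : ∀ x y, ‖g x - g y‖ ≤ L * ‖x - y‖) (hsmall : 2 * E * η * L ≤ 1)
    (hstep : ∀ τ < E, x (τ + 1) = x τ - η • g (x τ)) {τ : ℕ} (hτ : τ ≤ E) :
    ‖x τ - x 0‖ ≤ 2 * η * τ * ‖g (x 0)‖ := by
  induction τ with
  | zero => simp
  | succ τ ih =>
    have hτE : (τ : ℝ) + 1 ≤ E := by exact_mod_cast hτ
    have hD := ih (by omega)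
    set D := ‖x τ - x 0‖
    set B := ‖g (x 0)‖
    have hgτ : ‖g (x τ)‖ ≤ B + L * D :=
      calc ‖g (x τ)‖ ≤ B + ‖g (x τ) - g (x 0)‖ := norm_le_norm_add_norm_sub' _ _
        _ ≤ B + L * D := by gcongr; exact hg _ _
    have hτsmall : 2 * τ * η * L ≤ 1 := by nlinarith [mul_nonneg hη hL]
    calc ‖x (τ + 1) - x 0‖ = ‖(x τ - x 0) - η • g (x τ)‖ := by
          rw [hstep τ (by omega), sub_right_comm]
      _ ≤ D + η * (B + L * D) := by
          refine (norm_sub_le _ _).trans ?_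
          rw [norm_smul, Real.norm_of_nonneg hη]
          gcongr
      _ ≤ 2 * η * (τ + 1 : ℕ) * B := by
          push_cast
          nlinarith [mul_le_mul_of_nonneg_left hD (mul_nonneg hη hL),
            mul_le_mul_of_nonneg_left hτsmall (mul_nonneg hη (norm_nonneg (g (x 0))))]

theorem norm_sum_range_sub_le_of_gradient_steps (hL : 0 ≤ L) (hη : 0 ≤ η)
    (hg : ∀ x y, ‖g x - g y‖ ≤ L * ‖x - y‖) (hsmall : 2 * E * η * L ≤ 1)
    (hstep : ∀ τ < E, x (τ + 1) = x τ - η • g (x τ)) :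
    ‖∑ τ ∈ range E, (g (x τ) - g (x 0))‖ ≤ 2 * η * E ^ 2 * L * ‖g (x 0)‖ :=
  calc ‖∑ τ ∈ range E, (g (x τ) - g (x 0))‖
      ≤ ∑ _τ ∈ range E, L * (2 * η * E * ‖g (x 0)‖) := by
        refine norm_sum_le_of_le _ fun τ hτ => (hg _ _).trans ?_
        have hτE : τ ≤ E := (mem_range.mp hτ).le
        gcongr
        exact (norm_sub_le_of_gradient_steps hL hη hg hsmall hstep hτE).trans (by gcongr)
    _ = 2 * η * E ^ 2 * L * ‖g (x 0)‖ := by rw [sum_const, card_range, nsmul_eq_mul]; ring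

theorem norm_sum_smul_sum_range_sub_le {ι : Type*} [Fintype ι] {p : ι → ℝ} (hp : ∀ i, 0 ≤ p i)
    {g : ι → V → V} {x : ι → ℕ → V} (hL : 0 ≤ L) (hη : 0 ≤ η)
    (hg : ∀ i x y, ‖g i x - g i y‖ ≤ L * ‖x - y‖) (hsmall : 2 * E * η * L ≤ 1)
    (hstep : ∀ i, ∀ τ < E, x i (τ + 1) = x i τ - η • g i (x i τ)) :
    ‖∑ i, p i • ∑ τ ∈ range E, (g i (x i τ) - g i (x i 0))‖
      ≤ 2 * η * E ^ 2 * L * ∑ i, p i * ‖g i (x i 0)‖ :=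
  calc ‖∑ i, p i • ∑ τ ∈ range E, (g i (x i τ) - g i (x i 0))‖
      ≤ ∑ i, p i * (2 * η * E ^ 2 * L * ‖g i (x i 0)‖) :=
        (norm_sum_smul_le hp _).trans <| sum_le_sum fun i _ => mul_le_mul_of_nonneg_left
          (norm_sum_range_sub_le_of_gradient_steps hL hη (hg i) hsmall (hstep i)) (hp i)
    _ = 2 * η * E ^ 2 * L * ∑ i, p i * ‖g i (x i 0)‖ := by
        rw [mul_sum]; congr 1; ext i; ring

end GradientSteps

theorem div_mul_sq_le_of_le_mul_abs_add {E η L a b δ : ℝ} (hE : 0 < E) (hη : 0 ≤ η)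
    (hb : 0 ≤ b) (hbound : b ≤ 2 * η * E ^ 2 * L * (|δ| + a)) :
    η / E * b ^ 2 ≤ 8 * E ^ 3 * η ^ 3 * L ^ 2 * (δ ^ 2 + a ^ 2) :=
  calc η / E * b ^ 2 ≤ η / E * (2 * η * E ^ 2 * L * (|δ| + a)) ^ 2 := by gcongr
    _ = 4 * E ^ 3 * η ^ 3 * L ^ 2 * (|δ| + a) ^ 2 := by field_simp; ring
    _ ≤ 8 * E ^ 3 * η ^ 3 * L ^ 2 * (δ ^ 2 + a ^ 2) := by
        have : (|δ| + a) ^ 2 ≤ 2 * (δ ^ 2 + a ^ 2) := by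
          nlinarith [sq_nonneg (|δ| - a), sq_abs δ]
        nlinarith [show 0 ≤ 4 * E ^ 3 * η ^ 3 * L ^ 2 by positivity]

theorem stmt_12_general (d M : ℕ) (f : Fin M → EuclideanSpace ℝ (Fin d) → ℝ) (L₁ : ℝ)
    (hdiff : ∀ i, Differentiable ℝ (f i))
    (hLip : ∀ i x y, ‖gradient (f i) x - gradient (f i) y‖ ≤ L₁ * ‖x - y‖)
    (p : Fin M → ℝ) (hp : ∀ i, 0 ≤ p i) (hpsum : ∑ i, p i = 1)
    (F : EuclideanSpace ℝ (Fin d) → ℝ) (hF : ∀ θ, F θ = ∑ i, p i * f i θ)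
    (δ : ℝ)
    (hdiv : ∀ θ, ∑ i, p i * ‖gradient (f i) θ - gradient F θ‖ ^ 2 ≤ δ ^ 2)
    (E : ℕ) (η : ℝ) (hη : 0 < η)
    (hη2 : η ≤ 1 / (2 * (E : ℝ) * L₁))
    (θ0 : EuclideanSpace ℝ (Fin d)) (θloc : Fin M → ℕ → EuclideanSpace ℝ (Fin d))
    (h0 : ∀ i, θloc i 0 = θ0)
    (hstep : ∀ i τ, τ < E →
      θloc i (τ + 1) = θloc i τ - η • gradient (f i) (θloc i τ))
    (θplus : EuclideanSpace ℝ (Fin d))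
    (hθplus : θplus
      = θ0 - η • ∑ i, p i • ∑ τ ∈ Finset.range E, gradient (f i) (θloc i τ)) :
    F θplus - F θ0
      ≤ -((E : ℝ) * η / 2) * (1 - 2 * (E : ℝ) * η * L₁
            - 64 * (E : ℝ) ^ 2 * η ^ 2 * L₁ ^ 2) * ‖gradient F θ0‖ ^ 2
        + 32 * (E : ℝ) ^ 3 * η ^ 3 * L₁ ^ 2 * δ ^ 2 := by
  -- `1 / (2EL₁)` would be the junk value `0` or negative otherwise
  have hEL : 0 < 2 * (E : ℝ) * L₁ := one_div_pos.mp (hη.trans_le hη2)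
  have hL : 0 < L₁ := pos_of_mul_pos_right hEL (by positivity)
  have hE : (0 : ℝ) < E := by linarith [pos_of_mul_pos_left hEL hL.le]
  have hsmall : 2 * (E : ℝ) * η * L₁ ≤ 1 := by
    rw [le_div_iff₀ hEL] at hη2; linarith
  have hFgrad θ : HasGradientAt F (∑ i, p i • gradient (f i) θ) θ := by
    rw [funext hF]; exact hasGradientAt_sum_mul p hdiff θ
  have hgrad θ : gradient F θ = ∑ i, p i • gradient (f i) θ := (hFgrad θ).gradient
  set Δ := ∑ i, p i • ∑ τ ∈ range E, (gradient (f i) (θloc i τ) - gradient (f i) θ0)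
  have hθplus' : θplus = θ0 - η • ((E : ℝ) • gradient F θ0 + Δ) := by
    rw [hθplus, hgrad, sum_smul_sum_range_eq_smul_add p _ (fun i => gradient (f i) θ0)]
  have hdrift := norm_sum_smul_sum_range_sub_le hp hL.le hη.le hLip hsmall hstep
  simp only [h0] at hdrift
  have hΔ : ‖Δ‖ ≤ 2 * η * E ^ 2 * L₁ * (|δ| + ‖gradient F θ0‖) :=
    hdrift.trans <| by gcongr; exact sum_mul_norm_le_of_sum_mul_norm_sub_sq_le hp hpsum (hdiv θ0)
  have hdesc := apply_sub_smul_le_of_lipschitz_gradient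
    (fun θ => (hFgrad θ).differentiableAt)
    (fun x y => by rw [hgrad, hgrad]; exact norm_sum_smul_sub_le hp hpsum hLip x y)
    hL.le hη.le hE hsmall θ0 Δ
  have hΔsq := div_mul_sq_le_of_le_mul_abs_add hE hη.le (norm_nonneg _) hΔ
  have : 0 ≤ (E : ℝ) ^ 3 * η ^ 3 * L₁ ^ 2 * (δ ^ 2 + ‖gradient F θ0‖ ^ 2) := by positivity
  rw [hθplus']
  linarith

/-- Descent bound for the shared-parameter block (Lemma O1, full-gradient
case): one round of federated local gradient descent with E local steps
decreases F by an amount proportional to ‖∇F(θ⁰)‖², up to the heterogeneity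
term 32E³η³L₁²δ². -/
theorem stmt_12 (d M : ℕ) (f : Fin M → EuclideanSpace ℝ (Fin d) → ℝ) (L₁ : ℝ)
    (hdiff : ∀ i, Differentiable ℝ (f i))
    (hLip : ∀ i x y, ‖gradient (f i) x - gradient (f i) y‖ ≤ L₁ * ‖x - y‖)
    (p : Fin M → ℝ) (hp : ∀ i, 0 ≤ p i) (hpsum : ∑ i, p i = 1)
    (F : EuclideanSpace ℝ (Fin d) → ℝ) (hF : ∀ θ, F θ = ∑ i, p i * f i θ)
    (δ : ℝ) (hδ : 0 ≤ δ)
    (hdiv : ∀ θ, ∑ i, p i * ‖gradient (f i) θ - gradient F θ‖ ^ 2 ≤ δ ^ 2)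
    (E : ℕ) (hE : 0 < E) (η : ℝ) (hη : 0 < η)
    (hη2 : η ≤ 1 / (2 * (E : ℝ) * L₁))
    (θ0 : EuclideanSpace ℝ (Fin d)) (θloc : Fin M → ℕ → EuclideanSpace ℝ (Fin d))
    (h0 : ∀ i, θloc i 0 = θ0)
    (hstep : ∀ i τ, τ < E →
      θloc i (τ + 1) = θloc i τ - η • gradient (f i) (θloc i τ))
    (θplus : EuclideanSpace ℝ (Fin d))
    (hθplus : θplus
      = θ0 - η • ∑ i, p i • ∑ τ ∈ Finset.range E, gradient (f i) (θloc i τ)) :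
    F θplus - F θ0
      ≤ -((E : ℝ) * η / 2) * (1 - 2 * (E : ℝ) * η * L₁
            - 64 * (E : ℝ) ^ 2 * η ^ 2 * L₁ ^ 2) * ‖gradient F θ0‖ ^ 2
        + 32 * (E : ℝ) ^ 3 * η ^ 3 * L₁ ^ 2 * δ ^ 2 :=
  stmt_12_general d M f L₁ hdiff hLip p hp hpsum F hF δ hdiv E η hη hη2 θ0 θloc h0 hstep θplus
    hθplus
end
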